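/- arXiv:1101.3997 — 4 statements merged into one kernel-verified Lean document; each statement's English description precedes it below -/
import Mathlib

section
/- de Bruijn identity: for measurable functions f₁,…,f_k, g₁,…,g_k on a measure space (X, μ) with all products f_a·g_b integrable on W ⊆ X, one has k! · det[∫_W f_a(ζ) g_b(ζ) dμ(ζ)]_{a,b=1..k} = ∫_{W^k} det[f_a(ζ_c)]_{a,c} · det[g_b(ζ_d)]_{b,d} ∏_{j=1}^k dμ(ζ_j). -/
/-!
Expand both determinants by the Leibniz formula: the integrand becomes a signed double sum over
permutations `σ, τ` of `∏ i, f (σ i) (ζ i) * g (τ i) (ζ i)`, and by Fubini each such term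
integrates to `∏ i, M (σ i) (τ i)`, where `M a b = ∫ f a * g b`. For fixed `τ` the substitution
`σ = π * τ` turns the sum over `σ` into `det M`, and there are `k!` choices of `τ`.
-/

open MeasureTheory Finset Equiv Equiv.Perm
open scoped Nat

namespace Matrix

variable {n R : Type*} [Fintype n] [DecidableEq n] [CommRing R]

theorem det_mul_det_eq_sum_sum_perm (A B : Matrix n n R) :
    A.det * B.det = ∑ σ : Perm n, ∑ τ : Perm n,
      ((sign σ * sign τ : ℤˣ) : R) * ∏ i, A (σ i) i * B (τ i) i := by
  simp only [det_apply', sum_mul_sum, prod_mul_distrib, Units.val_mul, Int.cast_mul]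
  refine sum_congr rfl fun σ _ => sum_congr rfl fun τ _ => ?_
  ring

theorem sum_sum_perm_sign_mul_prod_eq_factorial_smul_det (M : Matrix n n R) :
    ∑ σ : Perm n, ∑ τ : Perm n, ((sign σ * sign τ : ℤˣ) : R) * ∏ i, M (σ i) (τ i)
      = (Fintype.card n)! • M.det := by
  have inner_sum (τ : Perm n) :
      ∑ σ : Perm n, ((sign σ * sign τ : ℤˣ) : R) * ∏ i, M (σ i) (τ i) = M.det := by
    rw [det_apply', ← Equiv.sum_comp (Equiv.mulRight τ)]
    refine sum_congr rfl fun π _ => ?_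
    rw [coe_mulRight, Perm.sign_mul, mul_assoc (sign π), Int.units_mul_self, mul_one,
      ← Equiv.prod_comp τ (fun j => M (π j) j)]
    rfl
  rw [sum_comm, sum_congr rfl fun τ _ => inner_sum τ, sum_const, card_univ, Fintype.card_perm]

end Matrix

open Matrix

theorem integral_det_mul_det_eq_factorial_mul_det {ι X 𝕜 : Type*} [Fintype ι] [DecidableEq ι]
    [RCLike 𝕜] [MeasurableSpace X] (ν : Measure X) [SigmaFinite ν] (f g : ι → X → 𝕜)
    (hfg : ∀ a b, Integrable (fun x => f a x * g b x) ν) :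
    ∫ ζ, (of fun a c => f a (ζ c)).det * (of fun b d => g b (ζ d)).det ∂Measure.pi (fun _ => ν)
      = (Fintype.card ι)! * (of fun a b => ∫ x, f a x * g b x ∂ν).det := by
  have hprod (σ τ : Perm ι) :
      Integrable (fun ζ : ι → X => ∏ i, f (σ i) (ζ i) * g (τ i) (ζ i)) (Measure.pi fun _ => ν) :=
    Integrable.fintype_prod fun i => hfg (σ i) (τ i)
  calc _ = ∫ ζ, ∑ σ : Perm ι, ∑ τ : Perm ι,
          ((sign σ * sign τ : ℤˣ) : 𝕜) * ∏ i, f (σ i) (ζ i) * g (τ i) (ζ i)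
          ∂Measure.pi (fun _ => ν) := by
        simp only [det_mul_det_eq_sum_sum_perm, of_apply]
    _ = ∑ σ : Perm ι, ∑ τ : Perm ι,
          ((sign σ * sign τ : ℤˣ) : 𝕜) * ∏ i, ∫ x, f (σ i) x * g (τ i) x ∂ν := by
        rw [integral_finsetSum _ fun σ _ =>
          integrable_finsetSum _ fun τ _ => (hprod σ τ).const_mul _]
        refine sum_congr rfl fun σ _ => ?_
        rw [integral_finsetSum _ fun τ _ => (hprod σ τ).const_mul _]
        refine sum_congr rfl fun τ _ => ?_
        rw [integral_const_mul, integral_fintype_prod_eq_prod (fun i x => f (σ i) x * g (τ i) x)]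
    _ = _ := by
        rw [← nsmul_eq_mul, ← sum_sum_perm_sign_mul_prod_eq_factorial_smul_det]
        rfl

theorem deBruijn_identity_general
    {X : Type*} [MeasurableSpace X] (μ : Measure X) [SigmaFinite μ]
    (W : Set X) (k : ℕ)
    (f g : Fin k → X → ℂ)
    (hint : ∀ a b, IntegrableOn (fun ζ => f a ζ * g b ζ) W μ) :
    (k.factorial : ℂ) *
        Matrix.det (Matrix.of fun a b => ∫ ζ in W, f a ζ * g b ζ ∂μ)
      = ∫ ζ in Set.univ.pi (fun _ : Fin k => W),
          Matrix.det (Matrix.of fun a c => f a (ζ c)) *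
            Matrix.det (Matrix.of fun b d => g b (ζ d))
          ∂(Measure.pi fun _ : Fin k => μ) := by
  rw [Measure.restrict_pi_pi, integral_det_mul_det_eq_factorial_mul_det _ f g hint,
    Fintype.card_fin]

/-- de Bruijn identity: for measurable `f₁,…,f_k, g₁,…,g_k` on a measure space `(X, μ)` with
all products `f_a·g_b` integrable on `W ⊆ X`,
`k! · det[∫_W f_a g_b dμ] = ∫_{W^k} det[f_a(ζ_c)]·det[g_b(ζ_d)] ∏ dμ(ζ_j)`. -/
theorem deBruijn_identity
    {X : Type*} [MeasurableSpace X] (μ : Measure X) [SigmaFinite μ]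
    (W : Set X) (hW : MeasurableSet W) (k : ℕ)
    (f g : Fin k → X → ℂ)
    (hf : ∀ a, Measurable (f a)) (hg : ∀ b, Measurable (g b))
    (hint : ∀ a b, IntegrableOn (fun ζ => f a ζ * g b ζ) W μ) :
    (k.factorial : ℂ) *
        Matrix.det (Matrix.of fun a b => ∫ ζ in W, f a ζ * g b ζ ∂μ)
      = ∫ ζ in Set.univ.pi (fun _ : Fin k => W),
          Matrix.det (Matrix.of fun a c => f a (ζ c)) *
            Matrix.det (Matrix.of fun b d => g b (ζ d))
          ∂(Measure.pi fun _ : Fin k => μ) :=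
  deBruijn_identity_general μ W k f g hint
end

section
/- Airy kernel reproducing identity: for x, y ∈ ℝ, ∫₀^∞ Ai(x+z) Ai(y+z) dz = (Ai(x)Ai'(y) - Ai(y)Ai'(x)) / (x - y) for x ≠ y, where Ai is the Airy function. -/
/-!
The Wronskian `W z = A (x + z) * A' (y + z) - A (y + z) * A' (x + z)` of two translates of a
solution of `A'' = t A` has derivative `(y - x) * A (x + z) * A (y + z)`, so the integral is
`-W 0 / (y - x)` once `W → 0` at `+∞` and the integrand is integrable. Both follow from the energy
`w = A * A'`: on `[0, ∞)` we have `w' = A' ^ 2 + t * A ^ 2 ≥ 0`, and decay of `A` forces `w ≤ 0`.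
Hence `A' ^ 2` is nonincreasing there (so `A'` is bounded and `w → 0`), and
`∫₀^∞ (A' ^ 2 + t * A ^ 2) = -w 0` puts `A` in `L²` near `+∞`.
-/

open MeasureTheory Filter Set Topology

section AiryEquation

variable {A : ℝ → ℝ}

theorem hasDerivAt_mul_deriv_of_airy (hA : Differentiable ℝ A)
    (hODE : ∀ x, HasDerivAt (deriv A) (x * A x) x) (t : ℝ) :
    HasDerivAt (fun s => A s * deriv A s) (deriv A t ^ 2 + t * A t ^ 2) t :=
  ((hA t).hasDerivAt.mul (hODE t)).congr_deriv (by ring)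

theorem monotoneOn_mul_deriv_of_airy (hA : Differentiable ℝ A)
    (hODE : ∀ x, HasDerivAt (deriv A) (x * A x) x) :
    MonotoneOn (fun s => A s * deriv A s) (Ici 0) := by
  refine monotoneOn_of_hasDerivWithinAt_nonneg (convex_Ici 0)
    (fun t _ => (hasDerivAt_mul_deriv_of_airy hA hODE t).continuousAt.continuousWithinAt)
    (fun t _ => (hasDerivAt_mul_deriv_of_airy hA hODE t).hasDerivWithinAt) ?_
  rw [interior_Ici]
  intro t (ht : 0 < t)
  positivity

/-- A decaying solution cannot have `A * A' > 0` at some `c ≥ 0`: since `A * A'` increases on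
`[0, ∞)`, `A ^ 2` would then increase on `[c, ∞)` from the positive value `A c ^ 2`. -/
theorem mul_deriv_nonpos_of_airy (hA : Differentiable ℝ A)
    (hODE : ∀ x, HasDerivAt (deriv A) (x * A x) x) (hdecay : Tendsto A atTop (𝓝 0))
    {c : ℝ} (hc : 0 ≤ c) : A c * deriv A c ≤ 0 := by
  by_contra! hpos
  have hsq : ∀ t, HasDerivAt (fun s => A s ^ 2) (2 * (A t * deriv A t)) t := fun t =>
    ((hA t).hasDerivAt.pow 2).congr_deriv (by ring)
  have hsq_mono : MonotoneOn (fun s => A s ^ 2) (Ici c) := by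
    refine monotoneOn_of_hasDerivWithinAt_nonneg (convex_Ici c)
      (fun t _ => (hsq t).continuousAt.continuousWithinAt)
      (fun t _ => (hsq t).hasDerivWithinAt) ?_
    rw [interior_Ici]
    intro t (ht : c < t)
    have hw : A c * deriv A c ≤ A t * deriv A t :=
      monotoneOn_mul_deriv_of_airy hA hODE hc (hc.trans ht.le) ht.le
    linarith
  have hAc : A c ^ 2 ≤ 0 :=
    ge_of_tendsto (by simpa using hdecay.pow 2)
      ((eventually_ge_atTop c).mono fun t ht => hsq_mono self_mem_Ici ht ht)
  have hA0 : A c = 0 := pow_eq_zero_iff two_ne_zero |>.mp (le_antisymm hAc (sq_nonneg _))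
  simp [hA0] at hpos

theorem antitoneOn_deriv_sq_of_airy (hA : Differentiable ℝ A)
    (hODE : ∀ x, HasDerivAt (deriv A) (x * A x) x) (hdecay : Tendsto A atTop (𝓝 0)) :
    AntitoneOn (fun s => deriv A s ^ 2) (Ici 0) := by
  have hsq : ∀ t, HasDerivAt (fun s => deriv A s ^ 2) (2 * t * (A t * deriv A t)) t := fun t =>
    ((hODE t).pow 2).congr_deriv (by ring)
  refine antitoneOn_of_hasDerivWithinAt_nonpos (convex_Ici 0)
    (fun t _ => (hsq t).continuousAt.continuousWithinAt)
    (fun t _ => (hsq t).hasDerivWithinAt) ?_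
  rw [interior_Ici]
  intro t (ht : 0 < t)
  exact mul_nonpos_of_nonneg_of_nonpos (by positivity)
    (mul_deriv_nonpos_of_airy hA hODE hdecay ht.le)

theorem isBoundedUnder_deriv_of_airy (hA : Differentiable ℝ A)
    (hODE : ∀ x, HasDerivAt (deriv A) (x * A x) x) (hdecay : Tendsto A atTop (𝓝 0)) :
    IsBoundedUnder (· ≤ ·) atTop (norm ∘ deriv A) := by
  refine ⟨|deriv A 0|, eventually_map.mpr ?_⟩
  filter_upwards [eventually_ge_atTop 0] with t ht
  exact sq_le_sq.mp (antitoneOn_deriv_sq_of_airy hA hODE hdecay self_mem_Ici ht ht)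

theorem tendsto_comp_add_mul_deriv_comp_add_of_airy (hA : Differentiable ℝ A)
    (hODE : ∀ x, HasDerivAt (deriv A) (x * A x) x) (hdecay : Tendsto A atTop (𝓝 0)) (x y : ℝ) :
    Tendsto (fun z => A (x + z) * deriv A (y + z)) atTop (𝓝 0) :=
  (hdecay.comp (tendsto_atTop_add_const_left atTop x tendsto_id)).zero_mul_isBoundedUnder_le
    ((tendsto_atTop_add_const_left atTop y tendsto_id).isBoundedUnder_comp
      (isBoundedUnder_deriv_of_airy hA hODE hdecay))

theorem integrableOn_deriv_sq_add_mul_sq_of_airy (hA : Differentiable ℝ A)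
    (hODE : ∀ x, HasDerivAt (deriv A) (x * A x) x) (hdecay : Tendsto A atTop (𝓝 0)) :
    IntegrableOn (fun t => deriv A t ^ 2 + t * A t ^ 2) (Ioi 0) := by
  refine integrableOn_Ioi_deriv_of_nonneg
    (hasDerivAt_mul_deriv_of_airy hA hODE 0).continuousAt.continuousWithinAt
    (fun t _ => hasDerivAt_mul_deriv_of_airy hA hODE t) (fun t (ht : 0 < t) => by positivity)
    (l := 0) ?_
  simpa using tendsto_comp_add_mul_deriv_comp_add_of_airy hA hODE hdecay 0 0

theorem integrableOn_sq_of_airy (hA : Differentiable ℝ A)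
    (hODE : ∀ x, HasDerivAt (deriv A) (x * A x) x) (hdecay : Tendsto A atTop (𝓝 0)) (c : ℝ) :
    IntegrableOn (fun t => A t ^ 2) (Ioi c) := by
  have hcont : Continuous fun t => A t ^ 2 := hA.continuous.pow 2
  have htail : IntegrableOn (fun t => A t ^ 2) (Ioi 1) := by
    refine ((integrableOn_deriv_sq_add_mul_sq_of_airy hA hODE hdecay).mono_set
      (Ioi_subset_Ioi zero_le_one)).mono' hcont.aestronglyMeasurable ?_
    filter_upwards [ae_restrict_mem measurableSet_Ioi] with t (ht : 1 < t)
    rw [Real.norm_of_nonneg (sq_nonneg _)]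
    nlinarith [sq_nonneg (deriv A t), sq_nonneg (A t)]
  exact (hcont.integrableOn_Ioc.union htail).mono_set Ioi_subset_Ioc_union_Ioi

theorem integrableOn_comp_add_mul_comp_add_of_airy (hA : Differentiable ℝ A)
    (hODE : ∀ x, HasDerivAt (deriv A) (x * A x) x) (hdecay : Tendsto A atTop (𝓝 0)) (x y : ℝ) :
    IntegrableOn (fun z => A (x + z) * A (y + z)) (Ioi 0) := by
  have hsq (c : ℝ) : IntegrableOn (fun z => A (c + z) ^ 2) (Ioi 0) := by
    have hpre : (c + ·) ⁻¹' Ioi c = Ioi 0 := by ext z; simp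
    rw [← hpre]
    exact ((measurePreserving_add_left volume c).integrableOn_comp_preimage
      (measurableEmbedding_addLeft c)).mpr (integrableOn_sq_of_airy hA hODE hdecay c)
  have hcont := hA.continuous
  refine ((hsq x).add (hsq y)).mono' (by fun_prop) ?_
  filter_upwards with z
  simp only [Pi.add_apply]
  rw [Real.norm_eq_abs, abs_mul]
  nlinarith [sq_nonneg (|A (x + z)| - |A (y + z)|), sq_abs (A (x + z)), sq_abs (A (y + z))]

theorem hasDerivAt_wronskian_comp_add_of_airy (hA : Differentiable ℝ A)
    (hODE : ∀ x, HasDerivAt (deriv A) (x * A x) x) (x y z : ℝ) :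
    HasDerivAt (fun z => A (x + z) * deriv A (y + z) - A (y + z) * deriv A (x + z))
      ((y - x) * (A (x + z) * A (y + z))) z := by
  have hA' (c : ℝ) : HasDerivAt (fun z => A (c + z)) (deriv A (c + z)) z :=
    (hA (c + z)).hasDerivAt.comp_const_add c z
  have hA'' (c : ℝ) : HasDerivAt (fun z => deriv A (c + z)) ((c + z) * A (c + z)) z :=
    (hODE (c + z)).comp_const_add c z
  exact (((hA' x).mul (hA'' y)).sub ((hA' y).mul (hA'' x))).congr_deriv (by ring)

end AiryEquation

theorem airy_kernel_identity_general
    (Ai : ℝ → ℝ) (hdiff : Differentiable ℝ Ai)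
    (hODE : ∀ x, HasDerivAt (deriv Ai) (x * Ai x) x)
    (hdecay : Tendsto Ai atTop (nhds 0)) :
    ∀ x y : ℝ, x ≠ y →
      (∫ z in Set.Ioi (0 : ℝ), Ai (x + z) * Ai (y + z))
        = (Ai x * deriv Ai y - Ai y * deriv Ai x) / (x - y) := by
  intro x y hxy
  have hW_lim : Tendsto (fun z => Ai (x + z) * deriv Ai (y + z) - Ai (y + z) * deriv Ai (x + z))
      atTop (𝓝 0) := by
    simpa using (tendsto_comp_add_mul_deriv_comp_add_of_airy hdiff hODE hdecay x y).sub
      (tendsto_comp_add_mul_deriv_comp_add_of_airy hdiff hODE hdecay y x)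
  have hW := integral_Ioi_of_hasDerivAt_of_tendsto
    (hasDerivAt_wronskian_comp_add_of_airy hdiff hODE x y 0).continuousAt.continuousWithinAt
    (fun z _ => hasDerivAt_wronskian_comp_add_of_airy hdiff hODE x y z)
    ((integrableOn_comp_add_mul_comp_add_of_airy hdiff hODE hdecay x y).const_mul (y - x))
    hW_lim
  rw [integral_const_mul] at hW
  simp only [add_zero, zero_sub] at hW
  rw [eq_div_iff (sub_ne_zero.mpr hxy)]
  linear_combination -hW

/-- Airy kernel reproducing identity: for `x ≠ y`,
`∫₀^∞ Ai(x+z) Ai(y+z) dz = (Ai(x)Ai'(y) - Ai(y)Ai'(x))/(x-y)`, where `Ai` is the Airy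
function, i.e. the solution of `f'' = x f` decaying at `+∞` normalized by
`Ai(0) = 1/(3^{2/3} Γ(2/3))`. -/
theorem airy_kernel_identity
    (Ai : ℝ → ℝ) (hdiff : Differentiable ℝ Ai)
    (hODE : ∀ x, HasDerivAt (deriv Ai) (x * Ai x) x)
    (hdecay : Tendsto Ai atTop (nhds 0))
    (hnorm : Ai 0 = 1 / (3 ^ ((2 : ℝ) / 3) * Real.Gamma (2 / 3))) :
    ∀ x y : ℝ, x ≠ y →
      (∫ z in Set.Ioi (0 : ℝ), Ai (x + z) * Ai (y + z))
        = (Ai x * deriv Ai y - Ai y * deriv Ai x) / (x - y) :=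
  airy_kernel_identity_general Ai hdiff hODE hdecay
end

section
/- Define U_D(λ) = iλ(1_r ⊗ σ₃) + 2β₁ ⊗ σ₁ and A(λ) = (i λ²/2)(1_r ⊗ σ₃) + λ β₁ ⊗ σ₁ - (1/2)(Dβ₁) ⊗ σ₂ + i(β₁² + 𝐬) ⊗ σ₃, where β₁ depends on the variables s₁,…,s_r, 𝐬 = diag(s₁,…,s_r), and D = Σ_j ∂_{s_j}. Then the zero-curvature equation ∂_λ U_D - D A + [U_D, A] = 0 holds for all λ if and only if β₁ satisfies the noncommutative Painlevé II equation D²β₁ = 4(𝐬 β₁ + β₁ 𝐬) + 8 β₁³. -/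
open Matrix Complex Kronecker

attribute [local instance] Matrix.normedAddCommGroup Matrix.normedSpace

noncomputable def pauli1 : Matrix (Fin 2) (Fin 2) ℂ := !![0, 1; 1, 0]
noncomputable def pauli2 : Matrix (Fin 2) (Fin 2) ℂ := !![0, I; -I, 0]
noncomputable def pauli3 : Matrix (Fin 2) (Fin 2) ℂ := !![1, 0; 0, -1]

/-- The operator `D = Σⱼ ∂/∂sⱼ` acting on matrix-valued functions of `s ∈ ℝʳ`. -/
noncomputable def Dop {r : ℕ} {M : Type*} [NormedAddCommGroup M] [NormedSpace ℝ M]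
    (f : (Fin r → ℝ) → M) (s : Fin r → ℝ) : M :=
  ∑ j, fderiv ℝ f s (Pi.single j 1)

/-- `𝐬 = diag(s₁,…,s_r)` as a complex matrix. -/
noncomputable def diagS {r : ℕ} (s : Fin r → ℝ) : Matrix (Fin r) (Fin r) ℂ :=
  Matrix.diagonal fun j => (s j : ℂ)

/-- `U_D(λ) = iλ (1_r ⊗ σ₃) + 2 β₁ ⊗ σ₁`. -/
noncomputable def UD {r : ℕ} (β₁ : (Fin r → ℝ) → Matrix (Fin r) (Fin r) ℂ)
    (lam : ℂ) (s : Fin r → ℝ) : Matrix (Fin r × Fin 2) (Fin r × Fin 2) ℂ :=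
  (I * lam) • ((1 : Matrix (Fin r) (Fin r) ℂ) ⊗ₖ pauli3) + (2 : ℂ) • (β₁ s ⊗ₖ pauli1)

/-- `A(λ) = (iλ²/2)(1_r ⊗ σ₃) + λ β₁ ⊗ σ₁ - (1/2)(Dβ₁) ⊗ σ₂ + i(β₁² + 𝐬) ⊗ σ₃`. -/
noncomputable def Amat {r : ℕ} (β₁ : (Fin r → ℝ) → Matrix (Fin r) (Fin r) ℂ)
    (lam : ℂ) (s : Fin r → ℝ) : Matrix (Fin r × Fin 2) (Fin r × Fin 2) ℂ :=
  (I * lam ^ 2 / 2) • ((1 : Matrix (Fin r) (Fin r) ℂ) ⊗ₖ pauli3)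
    + lam • (β₁ s ⊗ₖ pauli1)
    - (1 / 2 : ℂ) • (Dop β₁ s ⊗ₖ pauli2)
    + I • ((β₁ s * β₁ s + diagS s) ⊗ₖ pauli3)

/-! ### Pauli matrix multiplication table -/

lemma p11 : pauli1 * pauli1 = 1 := by
  ext i j; fin_cases i <;> fin_cases j <;>
    simp [pauli1, Matrix.mul_apply, Fin.sum_univ_two, Matrix.one_apply]
lemma p22 : pauli2 * pauli2 = 1 := by
  ext i j; fin_cases i <;> fin_cases j <;>
    simp [pauli2, Matrix.mul_apply, Fin.sum_univ_two, Matrix.one_apply]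
lemma p33 : pauli3 * pauli3 = 1 := by
  ext i j; fin_cases i <;> fin_cases j <;>
    simp [pauli3, Matrix.mul_apply, Fin.sum_univ_two, Matrix.one_apply]
lemma p12 : pauli1 * pauli2 = (-I) • pauli3 := by
  ext i j; fin_cases i <;> fin_cases j <;>
    simp [pauli1, pauli2, pauli3, Matrix.mul_apply, Fin.sum_univ_two]
lemma p21 : pauli2 * pauli1 = I • pauli3 := by
  ext i j; fin_cases i <;> fin_cases j <;>
    simp [pauli1, pauli2, pauli3, Matrix.mul_apply, Fin.sum_univ_two]
lemma p23 : pauli2 * pauli3 = (-I) • pauli1 := by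
  ext i j; fin_cases i <;> fin_cases j <;>
    simp [pauli1, pauli2, pauli3, Matrix.mul_apply, Fin.sum_univ_two]
lemma p32 : pauli3 * pauli2 = I • pauli1 := by
  ext i j; fin_cases i <;> fin_cases j <;>
    simp [pauli1, pauli2, pauli3, Matrix.mul_apply, Fin.sum_univ_two]
lemma p31 : pauli3 * pauli1 = (-I) • pauli2 := by
  ext i j; fin_cases i <;> fin_cases j <;>
    simp [pauli1, pauli2, pauli3, Matrix.mul_apply, Fin.sum_univ_two]
lemma p13 : pauli1 * pauli3 = I • pauli2 := by
  ext i j; fin_cases i <;> fin_cases j <;>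
    simp [pauli1, pauli2, pauli3, Matrix.mul_apply, Fin.sum_univ_two]

/-! ### Continuous linear maps used for differentiation -/

noncomputable def kronCLM {n : ℕ} (P : Matrix (Fin 2) (Fin 2) ℂ) :
    Matrix (Fin n) (Fin n) ℂ →L[ℝ] Matrix (Fin n × Fin 2) (Fin n × Fin 2) ℂ :=
  LinearMap.toContinuousLinearMap
    { toFun := fun X => X ⊗ₖ P
      map_add' := fun X Y => Matrix.add_kronecker X Y P
      map_smul' := fun c X => Matrix.smul_kronecker c X P }

noncomputable def mulCLM (n : ℕ) :
    Matrix (Fin n) (Fin n) ℂ →L[ℝ] Matrix (Fin n) (Fin n) ℂ →L[ℝ] Matrix (Fin n) (Fin n) ℂ :=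
  LinearMap.toContinuousLinearMap
    { toFun := fun A => LinearMap.toContinuousLinearMap
        { toFun := fun B => A * B
          map_add' := fun X Y => mul_add A X Y
          map_smul' := fun c B => (mul_smul_comm c A B) }
      map_add' := fun A B => by ext C; simp [add_mul]
      map_smul' := fun c A => by ext B; simp [smul_mul_assoc] }

lemma mulCLM_apply {n : ℕ} (A B : Matrix (Fin n) (Fin n) ℂ) : mulCLM n A B = A * B := rfl

noncomputable def diagCLM (r : ℕ) : (Fin r → ℝ) →L[ℝ] Matrix (Fin r) (Fin r) ℂ :=
  LinearMap.toContinuousLinearMap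
    { toFun := diagS
      map_add' := fun s t => by
        ext i j
        by_cases h : i = j
        · subst h; simp [diagS]
        · simp [diagS, Matrix.diagonal_apply, h]
      map_smul' := fun c s => by
        ext i j
        by_cases h : i = j
        · subst h; simp [diagS, Complex.real_smul]
        · simp [diagS, Matrix.diagonal_apply, h] }

/-! ### Basic properties of `Dop` -/

section DopLemmas
variable {r : ℕ} {M N : Type*} [NormedAddCommGroup M] [NormedSpace ℝ M]
  [NormedAddCommGroup N] [NormedSpace ℝ N]

lemma Dop_add (f g : (Fin r → ℝ) → M) (s : Fin r → ℝ)
    (hf : DifferentiableAt ℝ f s) (hg : DifferentiableAt ℝ g s) :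
    Dop (fun t => f t + g t) s = Dop f s + Dop g s := by
  unfold Dop
  rw [fderiv_fun_add hf hg]
  simp [Finset.sum_add_distrib]

lemma Dop_sub (f g : (Fin r → ℝ) → M) (s : Fin r → ℝ)
    (hf : DifferentiableAt ℝ f s) (hg : DifferentiableAt ℝ g s) :
    Dop (fun t => f t - g t) s = Dop f s - Dop g s := by
  unfold Dop
  rw [fderiv_fun_sub hf hg]
  simp [Finset.sum_sub_distrib]

lemma Dop_const (c : M) (s : Fin r → ℝ) : Dop (fun _ => c) s = 0 := by
  unfold Dop; simp

lemma Dop_csmul [Module ℂ M] [SMulCommClass ℝ ℂ M] [ContinuousConstSMul ℂ M]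
    (c : ℂ) (f : (Fin r → ℝ) → M) (s : Fin r → ℝ) (hf : DifferentiableAt ℝ f s) :
    Dop (fun t => c • f t) s = c • Dop f s := by
  unfold Dop
  rw [fderiv_fun_const_smul hf c]
  simp [Finset.smul_sum]

lemma Dop_clm (L : M →L[ℝ] N) (f : (Fin r → ℝ) → M) (s : Fin r → ℝ)
    (hf : DifferentiableAt ℝ f s) :
    Dop (fun t => L (f t)) s = L (Dop f s) := by
  unfold Dop
  have h : fderiv ℝ (fun t => L (f t)) s = L.comp (fderiv ℝ f s) :=
    (L.hasFDerivAt.comp s hf.hasFDerivAt).fderiv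
  rw [h]
  simp [map_sum]

lemma Dop_kron {n : ℕ} (P : Matrix (Fin 2) (Fin 2) ℂ)
    (f : (Fin r → ℝ) → Matrix (Fin n) (Fin n) ℂ) (s : Fin r → ℝ)
    (hf : DifferentiableAt ℝ f s) :
    Dop (fun t => f t ⊗ₖ P) s = Dop f s ⊗ₖ P :=
  Dop_clm (kronCLM P) f s hf

lemma Dop_mul {n : ℕ} (f g : (Fin r → ℝ) → Matrix (Fin n) (Fin n) ℂ) (s : Fin r → ℝ)
    (hf : DifferentiableAt ℝ f s) (hg : DifferentiableAt ℝ g s) :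
    Dop (fun t => f t * g t) s = Dop f s * g s + f s * Dop g s := by
  have hb := (mulCLM n).isBoundedBilinearMap
  have H : HasFDerivAt (fun t => f t * g t)
      ((hb.deriv (f s, g s)).comp ((fderiv ℝ f s).prod (fderiv ℝ g s))) s :=
    (hb.hasFDerivAt (f s, g s)).comp (g := fun p : Matrix (Fin n) (Fin n) ℂ × Matrix (Fin n) (Fin n) ℂ => mulCLM n p.1 p.2) s ((hf.hasFDerivAt).prodMk (hg.hasFDerivAt))
  unfold Dop
  rw [H.fderiv]
  change ∑ j, (f s * fderiv ℝ g s (Pi.single j 1) + fderiv ℝ f s (Pi.single j 1) * g s) = _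
  rw [Finset.sum_add_distrib, ← Finset.mul_sum, ← Finset.sum_mul, add_comm]
  rfl

lemma Dop_diag (s : Fin r → ℝ) : Dop diagS s = (1 : Matrix (Fin r) (Fin r) ℂ) := by
  unfold Dop
  have h : fderiv ℝ (diagS (r := r)) s = diagCLM r := (diagCLM r).fderiv
  erw [h]
  change ∑ j, diagS (Pi.single j (1 : ℝ)) = _
  ext i j
  simp only [Matrix.sum_apply, diagCLM, LinearMap.coe_toContinuousLinearMap',
    LinearMap.coe_mk, AddHom.coe_mk, diagS, Matrix.diagonal_apply, Matrix.one_apply]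
  by_cases hij : i = j
  · subst hij
    simp [Pi.single_apply, apply_ite ((↑·) : ℝ → ℂ), Finset.sum_ite_eq]
  · simp [hij]

lemma contDiff_Dop (f : (Fin r → ℝ) → M) (hf : ContDiff ℝ (⊤ : ℕ∞) f) :
    ContDiff ℝ (⊤ : ℕ∞) (Dop f) := by
  unfold Dop
  apply ContDiff.sum
  intro j _
  exact (ContinuousLinearMap.apply ℝ M (Pi.single j 1 : Fin r → ℝ)).contDiff.comp
    (hf.fderiv_right (by simp))

end DopLemmas

/-! ### Auxiliary algebra -/

lemma sub_kron {r : ℕ} (A B : Matrix (Fin r) (Fin r) ℂ) (P : Matrix (Fin 2) (Fin 2) ℂ) :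
    (A - B) ⊗ₖ P = A ⊗ₖ P - B ⊗ₖ P := by
  ext ⟨i, a⟩ ⟨j, b⟩
  simp [Matrix.kroneckerMap_apply, sub_mul]

lemma kron_pauli2_eq_zero {r : ℕ} {C : Matrix (Fin r) (Fin r) ℂ}
    (h : C ⊗ₖ pauli2 = 0) : C = 0 := by
  ext i j
  have h2 := congrFun (congrFun h (i, 0)) (j, 1)
  simp [Matrix.kroneckerMap_apply, pauli2, Complex.I_ne_zero] at h2
  simpa using h2

/-- The central algebraic identity: the zero-curvature combination collapses onto the
`⊗ₖ pauli2` component. -/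
lemma key {r : ℕ} (B Bd Bdd S : Matrix (Fin r) (Fin r) ℂ) (lam : ℂ) :
    I • ((1 : Matrix (Fin r) (Fin r) ℂ) ⊗ₖ pauli3)
      - (lam • (Bd ⊗ₖ pauli1) - (1 / 2 : ℂ) • (Bdd ⊗ₖ pauli2)
          + I • ((Bd * B + B * Bd + 1) ⊗ₖ pauli3))
      + (((I * lam) • ((1 : Matrix (Fin r) (Fin r) ℂ) ⊗ₖ pauli3) + (2 : ℂ) • (B ⊗ₖ pauli1)) *
           ((I * lam ^ 2 / 2) • ((1 : Matrix (Fin r) (Fin r) ℂ) ⊗ₖ pauli3) + lam • (B ⊗ₖ pauli1)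
             - (1 / 2 : ℂ) • (Bd ⊗ₖ pauli2) + I • ((B * B + S) ⊗ₖ pauli3))
         - ((I * lam ^ 2 / 2) • ((1 : Matrix (Fin r) (Fin r) ℂ) ⊗ₖ pauli3) + lam • (B ⊗ₖ pauli1)
             - (1 / 2 : ℂ) • (Bd ⊗ₖ pauli2) + I • ((B * B + S) ⊗ₖ pauli3)) *
           ((I * lam) • ((1 : Matrix (Fin r) (Fin r) ℂ) ⊗ₖ pauli3) + (2 : ℂ) • (B ⊗ₖ pauli1)))
    = ((1 / 2 : ℂ) • Bdd - (4 : ℂ) • (B * (B * B)) - (2 : ℂ) • (B * S + S * B)) ⊗ₖ pauli2 := by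
  simp only [mul_add, add_mul, mul_sub, sub_mul, smul_mul_assoc, mul_smul_comm,
    ← Matrix.mul_kronecker_mul, p11, p22, p33, p12, p21, p23, p32, p31, p13,
    Matrix.kronecker_smul, Matrix.smul_kronecker, Matrix.add_kronecker, sub_kron,
    one_mul, mul_one, mul_assoc, smul_smul]
  match_scalars <;> (try ring_nf) <;> simp [Complex.I_sq]

/-- The `λ`-derivative of `U_D`. -/
lemma deriv_UD {r : ℕ} (β₁ : (Fin r → ℝ) → Matrix (Fin r) (Fin r) ℂ)
    (s : Fin r → ℝ) (lam : ℂ) :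
    deriv (fun μ => UD β₁ μ s) lam = I • ((1 : Matrix (Fin r) (Fin r) ℂ) ⊗ₖ pauli3) := by
  have h1 : HasDerivAt (fun μ : ℂ => I * μ) I lam := by
    simpa using (hasDerivAt_id lam).const_mul I
  have h : HasDerivAt (fun μ => UD β₁ μ s) (I • ((1 : Matrix (Fin r) (Fin r) ℂ) ⊗ₖ pauli3)) lam := by
    unfold UD; exact
      (h1.smul_const ((1 : Matrix (Fin r) (Fin r) ℂ) ⊗ₖ pauli3)).add_const
        ((2 : ℂ) • (β₁ s ⊗ₖ pauli1))
  exact h.deriv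

/-- Computation of `D A`. -/
lemma Dop_Amat {r : ℕ} (β₁ : (Fin r → ℝ) → Matrix (Fin r) (Fin r) ℂ)
    (hβ : ContDiff ℝ (⊤ : ℕ∞) β₁) (lam : ℂ) (s : Fin r → ℝ) :
    Dop (fun t => Amat β₁ lam t) s
      = lam • (Dop β₁ s ⊗ₖ pauli1) - (1 / 2 : ℂ) • (Dop (Dop β₁) s ⊗ₖ pauli2)
        + I • ((Dop β₁ s * β₁ s + β₁ s * Dop β₁ s + 1) ⊗ₖ pauli3) := by
  have hdβ : DifferentiableAt ℝ β₁ s := (hβ.differentiable (by simp)) s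
  have hdD : DifferentiableAt ℝ (Dop β₁) s := ((contDiff_Dop β₁ hβ).differentiable (by simp)) s
  have hk : ∀ (P : Matrix (Fin 2) (Fin 2) ℂ) (f : (Fin r → ℝ) → Matrix (Fin r) (Fin r) ℂ),
      DifferentiableAt ℝ f s → DifferentiableAt ℝ (fun t => f t ⊗ₖ P) s := fun P f hf =>
    ((kronCLM P).differentiableAt).comp s hf
  have hmul : DifferentiableAt ℝ (fun t => β₁ t * β₁ t) s :=
    ((mulCLM r).isBoundedBilinearMap.differentiableAt (β₁ s, β₁ s)).comp (g := fun p : Matrix (Fin r) (Fin r) ℂ × Matrix (Fin r) (Fin r) ℂ => mulCLM r p.1 p.2) s (hdβ.prodMk hdβ)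
  have hdiag : DifferentiableAt ℝ (diagS (r := r)) s := (diagCLM r).differentiableAt
  have h4i : DifferentiableAt ℝ (fun t => β₁ t * β₁ t + diagS t) s := hmul.add hdiag
  have h2 : DifferentiableAt ℝ (fun t => lam • (β₁ t ⊗ₖ pauli1)) s :=
    (hk pauli1 β₁ hdβ).const_smul lam
  have h3 : DifferentiableAt ℝ (fun t => (1 / 2 : ℂ) • (Dop β₁ t ⊗ₖ pauli2)) s :=
    (hk pauli2 _ hdD).const_smul (1 / 2 : ℂ)
  have h4 : DifferentiableAt ℝ (fun t => I • ((β₁ t * β₁ t + diagS t) ⊗ₖ pauli3)) s :=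
    (hk pauli3 _ h4i).const_smul I
  have h1 : DifferentiableAt ℝ
      (fun _ : Fin r → ℝ => (I * lam ^ 2 / 2) • ((1 : Matrix (Fin r) (Fin r) ℂ) ⊗ₖ pauli3)) s :=
    differentiableAt_const _
  have e : (fun t => Amat β₁ lam t)
      = fun t => (((I * lam ^ 2 / 2) • ((1 : Matrix (Fin r) (Fin r) ℂ) ⊗ₖ pauli3)
          + lam • (β₁ t ⊗ₖ pauli1)) - (1 / 2 : ℂ) • (Dop β₁ t ⊗ₖ pauli2))
          + I • ((β₁ t * β₁ t + diagS t) ⊗ₖ pauli3) := rfl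
  rw [e, Dop_add _ _ s ((h1.fun_add h2).fun_sub h3) h4,
      Dop_sub _ _ s (h1.fun_add h2) h3,
      Dop_add _ _ s h1 h2,
      Dop_const, Dop_csmul lam _ s (hk pauli1 β₁ hdβ),
      Dop_csmul _ _ s (hk pauli2 _ hdD),
      Dop_csmul I _ s (hk pauli3 _ h4i),
      Dop_kron pauli1 β₁ s hdβ, Dop_kron pauli2 _ s hdD, Dop_kron pauli3 _ s h4i,
      Dop_add _ _ s hmul hdiag, Dop_mul β₁ β₁ s hdβ hdβ, Dop_diag, zero_add]

/-- The zero-curvature equation `∂_λ U_D - D A + [U_D, A] = 0` holds for all `λ` if and only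
if `β₁` satisfies the noncommutative Painlevé II equation
`D²β₁ = 4(𝐬 β₁ + β₁ 𝐬) + 8 β₁³`. -/
theorem zero_curvature_iff_ncPainleveII
    {r : ℕ} (β₁ : (Fin r → ℝ) → Matrix (Fin r) (Fin r) ℂ)
    (hβ : ContDiff ℝ (⊤ : ℕ∞) β₁) :
    (∀ (s : Fin r → ℝ) (lam : ℂ),
        deriv (fun μ => UD β₁ μ s) lam - Dop (fun t => Amat β₁ lam t) s
          + (UD β₁ lam s * Amat β₁ lam s - Amat β₁ lam s * UD β₁ lam s) = 0)
      ↔ (∀ s : Fin r → ℝ,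
          Dop (Dop β₁) s
            = (4 : ℂ) • (diagS s * β₁ s + β₁ s * diagS s) + (8 : ℂ) • (β₁ s ^ 3)) := by
  have main : ∀ (s : Fin r → ℝ) (lam : ℂ),
      deriv (fun μ => UD β₁ μ s) lam - Dop (fun t => Amat β₁ lam t) s
        + (UD β₁ lam s * Amat β₁ lam s - Amat β₁ lam s * UD β₁ lam s)
      = ((1 / 2 : ℂ) • Dop (Dop β₁) s - (4 : ℂ) • (β₁ s * (β₁ s * β₁ s))
          - (2 : ℂ) • (β₁ s * diagS s + diagS s * β₁ s)) ⊗ₖ pauli2 := by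
    intro s lam
    rw [deriv_UD, Dop_Amat β₁ hβ]
    exact key (β₁ s) (Dop β₁ s) (Dop (Dop β₁) s) (diagS s) lam
  have hpow : ∀ s : Fin r → ℝ, β₁ s ^ 3 = β₁ s * (β₁ s * β₁ s) := fun s => by
    rw [pow_succ, pow_two, mul_assoc]
  constructor
  · intro h s
    have hC := kron_pauli2_eq_zero ((main s 0).symm.trans (h s 0))
    rw [hpow s]
    linear_combination (norm := module) (2 : ℂ) • hC
  · intro h s lam
    rw [main s lam]
    have hs := h s
    rw [hpow s] at hs
    have hC : (1 / 2 : ℂ) • Dop (Dop β₁) s - (4 : ℂ) • (β₁ s * (β₁ s * β₁ s))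
        - (2 : ℂ) • (β₁ s * diagS s + diagS s * β₁ s) = 0 := by
      linear_combination (norm := module) (1 / 2 : ℂ) • hs
    rw [hC, Matrix.zero_kronecker]
end

section
/- In the scalar case r = 1, if u : ℝ → ℂ satisfies u'' = 2u³ + s u (Painlevé II) then w := (1/2)u² - (1/2)u' satisfies the Painlevé XXXIV equation w''' = 12 w w' + 2w + s w'. -/
/-!
The Miura transform `w = (u² - u')/2` turns Painlevé II into the first-order system
`u' = u² - 2w`, `w' = -u (2w + s/2)`. Along any solution of this system `w''` and `w'''` are
polynomials in `u`, `w` and `s`, and the Painlevé XXXIV identity for `w` becomes a polynomial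
identity.
-/

theorem hasDerivAt_ofReal (t : ℝ) : HasDerivAt (fun t : ℝ => (t : ℂ)) 1 t := by
  simpa using (hasDerivAt_id t).ofReal_comp

section MiuraSystem

variable {u w : ℝ → ℂ}
  (hu : ∀ t, HasDerivAt u (u t ^ 2 - 2 * w t) t)
  (hw : ∀ t, HasDerivAt w (-u t * (2 * w t + t / 2)) t)
include hu hw

theorem hasDerivAt_deriv_of_miuraSystem (t : ℝ) :
    HasDerivAt (deriv w) ((u t ^ 2 + 2 * w t) * (2 * w t + t / 2) - u t / 2) t := by
  have hw' : deriv w = fun t => -u t * (2 * w t + t / 2) := funext fun t => (hw t).deriv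
  rw [hw']
  refine ((hu t).neg.mul (((hw t).const_mul 2).add ((hasDerivAt_ofReal t).div_const 2)))
    |>.congr_deriv ?_
  simp only [Pi.add_apply, Pi.neg_apply]
  ring

theorem hasDerivAt_deriv_deriv_of_miuraSystem (t : ℝ) :
    HasDerivAt (deriv (deriv w))
      (12 * w t * deriv w t + 2 * w t + t * deriv w t) t := by
  have hw'' : deriv (deriv w) = fun t => (u t ^ 2 + 2 * w t) * (2 * w t + t / 2) - u t / 2 :=
    funext fun t => (hasDerivAt_deriv_of_miuraSystem hu hw t).deriv
  rw [hw'', (hw t).deriv]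
  refine ((((hu t).fun_pow 2).add ((hw t).const_mul 2)).mul
    (((hw t).const_mul 2).add ((hasDerivAt_ofReal t).div_const 2))).sub
    ((hu t).div_const 2) |>.congr_deriv ?_
  simp only [Pi.add_apply]
  ring

end MiuraSystem

/-- In the scalar case, if `u` satisfies Painlevé II `u'' = 2u³ + s u`, then the Miura
transform `w := (u² - u')/2` satisfies Painlevé XXXIV: `w''' = 12 w w' + 2w + s w'`. -/
theorem miura_PII_to_PXXXIV
    (u : ℝ → ℂ) (hu : ContDiff ℝ 3 u)
    (hPII : ∀ s : ℝ, deriv (deriv u) s = 2 * (u s) ^ 3 + (s : ℂ) * u s) :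
    ∀ s : ℝ,
      deriv (deriv (deriv (fun t => ((u t) ^ 2 - deriv u t) / 2))) s
        = 12 * (((u s) ^ 2 - deriv u s) / 2)
              * deriv (fun t => ((u t) ^ 2 - deriv u t) / 2) s
          + 2 * (((u s) ^ 2 - deriv u s) / 2)
          + (s : ℂ) * deriv (fun t => ((u t) ^ 2 - deriv u t) / 2) s := by
  have hu' : ∀ t, HasDerivAt u (deriv u t) t := fun t =>
    (hu.differentiable (by norm_num) t).hasDerivAt
  have hu'' : ∀ t, HasDerivAt (deriv u) (deriv (deriv u) t) t := fun t =>
    ((hu.of_le (by norm_num)).differentiable_deriv_two t).hasDerivAt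
  set w := fun t => ((u t) ^ 2 - deriv u t) / 2
  have hu_sys : ∀ t, HasDerivAt u (u t ^ 2 - 2 * w t) t := fun t =>
    (hu' t).congr_deriv (by ring)
  have hw_sys : ∀ t, HasDerivAt w (-u t * (2 * w t + t / 2)) t := fun t => by
    refine (((hu' t).fun_pow 2).sub (hu'' t)).div_const 2 |>.congr_deriv ?_
    rw [hPII]
    ring
  exact fun s => (hasDerivAt_deriv_deriv_of_miuraSystem hu_sys hw_sys s).deriv
end
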